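/- arXiv:1309.3595 — 3 statements merged into one kernel-verified Lean document; each statement's English description precedes it below -/
import Mathlib

section
/- Let χ be a Dirichlet character modulo q taking values in the unit circle together with 0, and suppose x ≥ 100. Then Re ∑_{n ≤ x} Λ(n)·χ(n)·(1/(n·log n) − 1/(x·log x)) ≥ ∑_{p^k ≤ x} Λ(p^k)·(−1)^k·(1/(p^k·log p^k) − 1/(x·log x)), where the right-hand sum runs over prime powers p^k ≤ x. -/
/-!
Only prime powers contribute, so the difference of the two sides splits over the primes
`p ≤ x` into sums `∑_{k ≤ K} b_k (Re z^k - (-1)^k)` with `z = χ p`, `K = ⌊log_p x⌋` and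
`b_k = 1/(k p^k) - log p/(x log x)`, which is nonnegative and decreasing on `1 ≤ k ≤ K`.
With `u = -z` the `k`-th term is `(-1)^(k+1) b_k (1 - Re u^k)`. If `z = 0` this is an
alternating sum with decreasing terms. If `|z| = 1` the odd terms are nonnegative and the
even ones are controlled by `1 - Re u^(2m) ≤ m^2 (1 - Re u^2) ≤ 4 m^2 (1 - Re u)`; summing
`∑ m y^m = y/(1-y)^2` shows that for `p ≥ 3` the term `k = 1` absorbs all even terms.
For `p = 2` the terms with `k ≤ 5` are compared exactly through the Chebyshev recurrence for
`Re u^k`, which needs `K ≥ 6`, that is `x ≥ 64`.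
-/

open Finset ArithmeticFunction

lemma norm_pow_sub_one_le {R : Type*} [NormedRing R] [NormOneClass R] {u : R} (hu : ‖u‖ ≤ 1)
    (m : ℕ) : ‖u ^ m - 1‖ ≤ m * ‖u - 1‖ := by
  induction m with
  | zero => simp
  | succ m ih =>
    have hum : ‖u ^ m‖ ≤ 1 := (norm_pow_le u m).trans (pow_le_one₀ (norm_nonneg u) hu)
    calc ‖u ^ (m + 1) - 1‖ = ‖(u ^ m - 1) + u ^ m * (u - 1)‖ := by noncomm_ring
      _ ≤ ‖u ^ m - 1‖ + ‖u ^ m‖ * ‖u - 1‖ :=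
        (norm_add_le _ _).trans (by gcongr; exact norm_mul_le _ _)
      _ ≤ (m + 1 : ℕ) * ‖u - 1‖ := by push_cast; nlinarith [norm_nonneg (u - 1)]

namespace Complex

variable {u : ℂ}

lemma re_pow_le_one (hu : ‖u‖ = 1) (k : ℕ) : (u ^ k).re ≤ 1 :=
  (re_le_norm _).trans_eq (by rw [norm_pow, hu, one_pow])

lemma one_sub_re_pow_le (hu : ‖u‖ = 1) (m : ℕ) : 1 - (u ^ m).re ≤ m ^ 2 * (1 - u.re) := by
  have h := pow_le_pow_left₀ (norm_nonneg _) (norm_pow_sub_one_le hu.le m) 2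
  rw [mul_pow, norm_sub_one_sq_eq_of_norm_eq_one hu,
    norm_sub_one_sq_eq_of_norm_eq_one (by rw [norm_pow, hu, one_pow])] at h
  linarith

lemma pow_two_of_norm_eq_one (hu : ‖u‖ = 1) : u ^ 2 = 2 * u.re * u - 1 := by
  have h := normSq_eq_norm_sq u
  rw [hu, normSq_apply] at h
  apply Complex.ext <;> simp [sq] <;> nlinarith

lemma re_pow_add_two (hu : ‖u‖ = 1) (k : ℕ) :
    (u ^ (k + 2)).re = 2 * u.re * (u ^ (k + 1)).re - (u ^ k).re := by
  have h : u ^ (k + 2) = ((2 * u.re : ℝ) : ℂ) * u ^ (k + 1) - u ^ k := by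
    rw [pow_add, pow_two_of_norm_eq_one hu]; push_cast; ring
  rw [h, sub_re, re_ofReal_mul]

/- The coefficients are the `b_k` of `P = 2`, with `c = 1/384` for odd and `c = 0` for even `k`;
the extra `5/144` bounds the contribution `∑_{m ≥ 3} m^2 b_{2m} ≤ ∑_{m ≥ 3} m 4^(-m) / 2` of the
even terms `k ≥ 6`. -/
lemma one_sub_re_pow_even_le_odd (hu : ‖u‖ = 1) :
    (1 / 8 + 5 / 144) * (1 - (u ^ 2).re) + 1 / 64 * (1 - (u ^ 4).re)
      ≤ 191 / 384 * (1 - u.re) + 5 / 128 * (1 - (u ^ 3).re) + 7 / 1920 * (1 - (u ^ 5).re) := by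
  have hre := re_pow_le_one hu 1
  rw [pow_one] at hre
  have h2 := re_pow_add_two hu 0
  have h3 := re_pow_add_two hu 1
  have h4 := re_pow_add_two hu 2
  have h5 := re_pow_add_two hu 3
  simp only [zero_add, pow_zero, one_re, pow_one, Nat.reduceAdd] at h2 h3 h4 h5
  rw [h5, h4, h3, h2]
  -- the difference of the two sides is `(1 - Re u)` times this quartic
  have hquartic : 0 ≤ 1271 / 5760 - 8 / 45 * u.re + 1 / 60 * u.re ^ 2 - 1 / 15 * u.re ^ 3
      + 7 / 120 * u.re ^ 4 := by
    nlinarith [sq_nonneg (u.re - 1), sq_nonneg (u.re ^ 2 - 1), sq_nonneg (u.re ^ 2 - u.re)]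
  nlinarith [mul_nonneg (sub_nonneg.2 hre) hquartic]

lemma re_pow_sub_neg_one_pow (z : ℂ) (k : ℕ) :
    (z ^ k).re - (-1) ^ k = (-1) ^ (k + 1) * (1 - ((-z) ^ k).re) := by
  rw [neg_pow z, show ((-1 : ℂ) ^ k) = ((-1 : ℝ) ^ k : ℝ) by push_cast; rfl, re_ofReal_mul]
  rcases k.even_or_odd with hk | hk
  · rw [hk.neg_one_pow, hk.add_one.neg_one_pow]; ring
  · rw [hk.neg_one_pow, hk.add_one.neg_one_pow]; ring

end Complex

lemma sum_range_neg_one_pow_mul_mem_Icc {E : Type*} [Ring E] [PartialOrder E] [IsOrderedRing E]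
    {f : ℕ → E} (hf : Antitone f) (K : ℕ) (hK : 0 ≤ f K) :
    ∑ i ∈ range (K + 1), (-1) ^ i * f i ∈ Set.Icc 0 (f 0) := by
  induction K generalizing f with
  | zero => simpa using hK
  | succ K ih =>
    obtain ⟨h0, h1⟩ := ih (f := fun i => f (i + 1)) (fun _ _ h => hf (by omega)) hK
    have h01 : f 1 ≤ f 0 := hf zero_le_one
    rw [zero_add] at h1
    simp only [sum_range_succ' _ (K + 1), pow_succ, mul_neg_one, neg_mul, sum_neg_distrib,
      pow_zero, one_mul]
    exact ⟨by rw [neg_add_eq_sub, sub_nonneg]; exact h1.trans h01,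
      neg_add_le_iff_le_add.2 (le_add_of_nonneg_left h0)⟩

lemma sum_Icc_neg_one_pow_mul_nonneg {f : ℕ → ℝ} (hf : Antitone fun i => f (i + 1)) {K : ℕ}
    (hK1 : 1 ≤ K) (hK : 0 ≤ f K) : 0 ≤ ∑ k ∈ Icc 1 K, (-1) ^ (k + 1) * f k := by
  obtain ⟨K, rfl⟩ := Nat.exists_eq_add_of_le' hK1
  rw [← Ico_add_one_right_eq_Icc, sum_Ico_eq_sum_range]
  simp only [add_tsub_cancel_right, add_comm 1, pow_succ, mul_neg, mul_one, neg_neg]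
  exact (sum_range_neg_one_pow_mul_mem_Icc hf K hK).1

lemma sum_Icc_neg_one_pow_mul_ge {g : ℕ → ℝ} {K : ℕ} (hg : ∀ k ∈ Icc 1 K, 0 ≤ g k)
    {S : Finset ℕ} (hS : S ⊆ {k ∈ Icc 1 K | Odd k}) :
    ∑ k ∈ S, g k - ∑ m ∈ Ioc 0 (K / 2), g (2 * m) ≤ ∑ k ∈ Icc 1 K, (-1) ^ (k + 1) * g k := by
  have hevens : {k ∈ Icc 1 K | ¬Odd k} = (Ioc 0 (K / 2)).image (2 * ·) := by
    ext k
    simp only [mem_filter, mem_Icc, mem_Ioc, mem_image, Nat.not_odd_iff_even, Nat.even_iff]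
    constructor
    · rintro ⟨⟨h1, h2⟩, h3⟩
      exact ⟨k / 2, ⟨by omega, by omega⟩, by omega⟩
    · rintro ⟨m, ⟨h1, h2⟩, rfl⟩
      omega
  have hodd : ∑ k ∈ Icc 1 K with Odd k, (-1) ^ (k + 1) * g k = ∑ k ∈ Icc 1 K with Odd k, g k :=
    sum_congr rfl fun k hk => by rw [(mem_filter.1 hk).2.add_one.neg_one_pow, one_mul]
  have heven : ∑ k ∈ Icc 1 K with ¬Odd k, (-1) ^ (k + 1) * g k
      = -∑ m ∈ Ioc 0 (K / 2), g (2 * m) := by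
    rw [hevens, sum_image (fun _ _ _ _ h => by omega), ← sum_neg_distrib]
    refine sum_congr rfl fun m _ => ?_
    rw [pow_succ, pow_mul]
    simp
  rw [← sum_filter_add_sum_filter_not (Icc 1 K) Odd, hodd, heven, ← sub_eq_add_neg]
  exact sub_le_sub_right
    (sum_le_sum_of_subset_of_nonneg hS fun k hk _ => hg k (mem_filter.1 hk).1) _

lemma sum_Ioc_mul_geometric_le {y : ℝ} (hy0 : 0 ≤ y) (hy1 : y < 1) (n L : ℕ) :
    ∑ m ∈ Ioc n L, (m : ℝ) * y ^ m ≤ y / (1 - y) ^ 2 - ∑ m ∈ range (n + 1), (m : ℝ) * y ^ m := by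
  have hdisj : Disjoint (range (n + 1)) (Ioc n L) := by
    rw [disjoint_left]
    intro m h1 h2
    simp only [mem_range, mem_Ioc] at h1 h2
    omega
  have h := sum_le_hasSum (f := fun m : ℕ => (m : ℝ) * y ^ m) (range (n + 1) ∪ Ioc n L)
    (fun m _ => by positivity)
    (hasSum_coe_mul_geometric_of_norm_lt_one (by rwa [Real.norm_of_nonneg hy0]))
  rw [sum_union hdisj] at h
  linarith

/-- With `P = p` and `c = log p / (x log x)` this is
`Λ(p^k) (1 / (p^k log p^k) - 1 / (x log x))`. -/
noncomputable def primePowerCoeff (P c : ℝ) (k : ℕ) : ℝ := 1 / (k * P ^ k) - c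

section primePowerCoeff

variable {P c : ℝ} {K : ℕ} {u : ℂ}

lemma antitone_primePowerCoeff_succ (hP : 1 ≤ P) :
    Antitone fun i : ℕ => primePowerCoeff P c (i + 1) := by
  refine antitone_nat_of_succ_le fun i => ?_
  unfold primePowerCoeff
  gcongr <;> omega

lemma primePowerCoeff_nonneg (hP : 1 ≤ P) {k : ℕ} (hk : 1 ≤ k) (hkK : k ≤ K)
    (hK : 0 ≤ primePowerCoeff P c K) : 0 ≤ primePowerCoeff P c k := by
  obtain ⟨i, rfl⟩ := Nat.exists_eq_add_of_le' hk
  obtain ⟨j, rfl⟩ := Nat.exists_eq_add_of_le' (hk.trans hkK)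
  exact hK.trans (antitone_primePowerCoeff_succ hP (by omega))

lemma sq_mul_primePowerCoeff_two_mul (hP : P ≠ 0) (m : ℕ) :
    (m : ℝ) ^ 2 * primePowerCoeff P c (2 * m) = m * (1 / P ^ 2) ^ m / 2 - m ^ 2 * c := by
  rcases eq_or_ne m 0 with rfl | hm
  · simp
  · unfold primePowerCoeff
    rw [pow_mul, one_div_pow]
    push_cast
    field_simp

lemma sum_Ioc_primePowerCoeff_mul_le (hP : 1 ≤ P) (hK : 0 ≤ primePowerCoeff P c K)
    (hu : ‖u‖ = 1) (n : ℕ) :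
    ∑ m ∈ Ioc n (K / 2), primePowerCoeff P c (2 * m) * (1 - (u ^ (2 * m)).re)
      ≤ (1 - (u ^ 2).re) * ∑ m ∈ Ioc n (K / 2), (m : ℝ) ^ 2 * primePowerCoeff P c (2 * m) := by
  rw [mul_sum]
  refine sum_le_sum fun m hm => ?_
  have hm := mem_Ioc.1 hm
  have hb := primePowerCoeff_nonneg hP (k := 2 * m) (by omega) (by omega) hK
  have hρ := Complex.one_sub_re_pow_le (u := u ^ 2) (by rw [norm_pow, hu, one_pow]) m
  rw [← pow_mul] at hρ
  calc primePowerCoeff P c (2 * m) * (1 - (u ^ (2 * m)).re)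
      ≤ primePowerCoeff P c (2 * m) * (m ^ 2 * (1 - (u ^ 2).re)) := by gcongr
    _ = (1 - (u ^ 2).re) * (m ^ 2 * primePowerCoeff P c (2 * m)) := by ring

lemma four_mul_sum_sq_mul_primePowerCoeff_le (hP : 3 ≤ P) (hc : 0 ≤ c)
    (h1 : 0 ≤ primePowerCoeff P c 1) (L : ℕ) :
    4 * ∑ m ∈ Ioc 0 L, (m : ℝ) ^ 2 * primePowerCoeff P c (2 * m) ≤ primePowerCoeff P c 1 := by
  rcases Nat.eq_zero_or_pos L with rfl | hL
  · simpa using h1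
  have hP0 : P ≠ 0 := by positivity
  have hy : 1 / P ^ 2 < 1 := by rw [div_lt_one (by positivity)]; nlinarith
  have hgeom := sum_Ioc_mul_geometric_le (by positivity) hy 0 L
  have hsq : 1 ≤ ∑ m ∈ Ioc 0 L, (m : ℝ) ^ 2 := by
    have h := single_le_sum (f := fun m : ℕ => (m : ℝ) ^ 2) (fun _ _ => by positivity)
      (mem_Ioc.2 ⟨zero_lt_one, hL⟩)
    simpa using h
  have hconst : 2 * (1 / P ^ 2 / (1 - 1 / P ^ 2) ^ 2) ≤ 1 / P := by
    have hP1 : 0 < P ^ 2 - 1 := by nlinarith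
    rw [show 1 / P ^ 2 / (1 - 1 / P ^ 2) ^ 2 = P ^ 2 / (P ^ 2 - 1) ^ 2 by field_simp,
      ← mul_div_assoc, div_le_div_iff₀ (by positivity) (by positivity)]
    nlinarith [mul_nonneg (sub_nonneg.2 hP) (sq_nonneg P)]
  simp only [sq_mul_primePowerCoeff_two_mul hP0, sum_sub_distrib, ← sum_div, ← sum_mul]
  simp only [zero_add, range_one, sum_singleton, CharP.cast_eq_zero, zero_mul, sub_zero]
    at hgeom
  unfold primePowerCoeff
  have hcT := mul_le_mul_of_nonneg_left hsq hc
  simp only [Nat.cast_one, one_mul, pow_one] at hcT ⊢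
  linarith

lemma sum_neg_one_pow_mul_primePowerCoeff_nonneg_of_three_le (hP : 3 ≤ P) (hc : 0 ≤ c)
    (hK1 : 1 ≤ K) (hK : 0 ≤ primePowerCoeff P c K) (hu : ‖u‖ = 1) :
    0 ≤ ∑ k ∈ Icc 1 K, (-1) ^ (k + 1) * (primePowerCoeff P c k * (1 - (u ^ k).re)) := by
  have hb : ∀ k ∈ Icc 1 K, 0 ≤ primePowerCoeff P c k := fun k hk =>
    primePowerCoeff_nonneg (by linarith) (mem_Icc.1 hk).1 (mem_Icc.1 hk).2 hK
  have hρ : ∀ k, 0 ≤ 1 - (u ^ k).re := fun k => sub_nonneg.2 (Complex.re_pow_le_one hu k)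
  refine le_trans ?_ (sum_Icc_neg_one_pow_mul_ge (fun k hk => mul_nonneg (hb k hk) (hρ k))
    (S := {1}) (by simp [hK1]))
  rw [sum_singleton, pow_one, sub_nonneg]
  have heven := sum_Ioc_primePowerCoeff_mul_le (by linarith) hK hu 0
  set M := ∑ m ∈ Ioc 0 (K / 2), (m : ℝ) ^ 2 * primePowerCoeff P c (2 * m)
  have hM0 : 0 ≤ M := sum_nonneg fun m hm =>
    mul_nonneg (sq_nonneg _) (hb _ (by simp only [mem_Ioc, mem_Icc] at hm ⊢; omega))
  have hM : 4 * M ≤ primePowerCoeff P c 1 :=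
    four_mul_sum_sq_mul_primePowerCoeff_le hP hc (hb 1 (by simp [hK1])) (K / 2)
  have hρ1 : 0 ≤ 1 - u.re := by simpa using hρ 1
  have hρ2 : 1 - (u ^ 2).re ≤ 4 * (1 - u.re) := by
    have := Complex.one_sub_re_pow_le hu 2
    norm_num at this
    linarith
  calc _ ≤ (1 - (u ^ 2).re) * M := heven
    _ ≤ 4 * (1 - u.re) * M := by gcongr
    _ ≤ primePowerCoeff P c 1 * (1 - u.re) := by nlinarith

lemma sum_neg_one_pow_mul_primePowerCoeff_two_nonneg (hc : 0 ≤ c) (hK6 : 6 ≤ K)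
    (hK : 0 ≤ primePowerCoeff 2 c K) (hu : ‖u‖ = 1) :
    0 ≤ ∑ k ∈ Icc 1 K, (-1) ^ (k + 1) * (primePowerCoeff 2 c k * (1 - (u ^ k).re)) := by
  have hb : ∀ k ∈ Icc 1 K, 0 ≤ primePowerCoeff 2 c k := fun k hk =>
    primePowerCoeff_nonneg one_le_two (mem_Icc.1 hk).1 (mem_Icc.1 hk).2 hK
  have hρ : ∀ k, 0 ≤ 1 - (u ^ k).re := fun k => sub_nonneg.2 (Complex.re_pow_le_one hu k)
  have hc384 : c ≤ 1 / 384 := by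
    have := primePowerCoeff_nonneg one_le_two (k := 6) (by norm_num) hK6 hK
    norm_num [primePowerCoeff] at this
    linarith
  have hS : ({1, 3, 5} : Finset ℕ) ⊆ {k ∈ Icc 1 K | Odd k} := by
    intro k hk
    simp only [mem_insert, mem_singleton] at hk
    rcases hk with rfl | rfl | rfl <;> simp only [mem_filter, mem_Icc] <;>
      exact ⟨⟨by omega, by omega⟩, by decide⟩
  refine le_trans ?_ (sum_Icc_neg_one_pow_mul_ge (fun k hk => mul_nonneg (hb k hk) (hρ k)) hS)
  have htail : ∑ m ∈ Ioc 2 (K / 2), (m : ℝ) ^ 2 * primePowerCoeff 2 c (2 * m) ≤ 5 / 144 := by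
    have hgeom := sum_Ioc_mul_geometric_le (y := 1 / 4) (by norm_num) (by norm_num) 2 (K / 2)
    have hcT : 0 ≤ (∑ m ∈ Ioc 2 (K / 2), (m : ℝ) ^ 2) * c := by positivity
    simp only [sq_mul_primePowerCoeff_two_mul two_ne_zero, sum_sub_distrib, ← sum_div,
      ← sum_mul]
    norm_num [sum_range_succ] at hgeom ⊢
    linarith
  rw [← sum_Ioc_consecutive _ (Nat.zero_le 2) (by omega : 2 ≤ K / 2),
    show Ioc 0 2 = {1, 2} by rfl]
  have heven := (sum_Ioc_primePowerCoeff_mul_le one_le_two hK hu 2).trans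
    (mul_le_mul_of_nonneg_left htail (hρ 2))
  have hcomb := Complex.one_sub_re_pow_even_le_odd hu
  -- keeps the tail opaque while `primePowerCoeff` is unfolded below
  set T := ∑ m ∈ Ioc 2 (K / 2), primePowerCoeff 2 c (2 * m) * (1 - (u ^ (2 * m)).re)
  norm_num [primePowerCoeff]
  have hρ1 : 0 ≤ 1 - u.re := by simpa using hρ 1
  linarith [mul_nonneg (sub_nonneg.2 hc384) hρ1, mul_nonneg (sub_nonneg.2 hc384) (hρ 3),
    mul_nonneg (sub_nonneg.2 hc384) (hρ 5), mul_nonneg hc (hρ 2), mul_nonneg hc (hρ 4)]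

lemma sum_primePowerCoeff_mul_re_pow_sub_nonneg (hP : 3 ≤ P ∨ P = 2 ∧ 6 ≤ K) (hc : 0 ≤ c)
    (hK1 : 1 ≤ K) (hK : 0 ≤ primePowerCoeff P c K) {z : ℂ} (hz : z = 0 ∨ ‖z‖ = 1) :
    0 ≤ ∑ k ∈ Icc 1 K, primePowerCoeff P c k * ((z ^ k).re - (-1) ^ k) := by
  have hP1 : 1 ≤ P := by rcases hP with hP | ⟨rfl, -⟩ <;> linarith
  rcases hz with rfl | hz
  · have hterm : ∀ k ∈ Icc 1 K, primePowerCoeff P c k * (((0 : ℂ) ^ k).re - (-1) ^ k)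
        = (-1) ^ (k + 1) * primePowerCoeff P c k := fun k hk => by
      rw [zero_pow (by have := (mem_Icc.1 hk).1; omega), Complex.zero_re, pow_succ]; ring
    rw [sum_congr rfl hterm]
    exact sum_Icc_neg_one_pow_mul_nonneg (antitone_primePowerCoeff_succ hP1) hK1 hK
  · simp only [Complex.re_pow_sub_neg_one_pow, mul_left_comm (primePowerCoeff P c _)]
    have hu : ‖-z‖ = 1 := by rwa [norm_neg]
    rcases hP with hP | ⟨rfl, hK6⟩
    · exact sum_neg_one_pow_mul_primePowerCoeff_nonneg_of_three_le hP hc hK1 hK hu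
    · exact sum_neg_one_pow_mul_primePowerCoeff_two_nonneg hc hK6 hK hu

end primePowerCoeff

lemma DirichletCharacter.eq_zero_or_norm_eq_one {q : ℕ} (χ : DirichletCharacter ℂ q)
    (a : ZMod q) : χ a = 0 ∨ ‖χ a‖ = 1 := by
  by_cases ha : IsUnit a
  · exact Or.inr (by simpa using χ.unit_norm_eq_one ha.unit)
  · exact Or.inl (χ.map_nonunit ha)

lemma re_sum_vonMangoldt_mul (s : Finset ℕ) (w : ℕ → ℂ) (f : ℕ → ℝ) :
    (∑ n ∈ s, (vonMangoldt n : ℂ) * w n * (f n : ℂ)).re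
      = ∑ n ∈ s with IsPrimePow n, vonMangoldt n * f n * (w n).re := by
  rw [Complex.re_sum, ← sum_filter_of_ne (p := IsPrimePow) fun n _ hn => by
    by_contra h
    simp [vonMangoldt_eq_zero_iff.2 h] at hn]
  refine sum_congr rfl fun n _ => ?_
  rw [mul_right_comm, ← Complex.ofReal_mul, Complex.re_ofReal_mul]

lemma sum_filter_isPrimePow_eq {M : Type*} [AddCommMonoid M] (N : ℕ) (F : ℕ → M) :
    ∑ n ∈ Icc 2 N with IsPrimePow n, F n
      = ∑ p ∈ (N + 1).primesBelow, ∑ k ∈ Icc 1 (Nat.log p N), F (p ^ k) := by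
  have hmaps : ∀ n ∈ {n ∈ Icc 2 N | IsPrimePow n}, n.minFac ∈ (N + 1).primesBelow := by
    intro n hn
    obtain ⟨h2, hN⟩ := mem_Icc.1 (mem_filter.1 hn).1
    exact Nat.mem_primesBelow.2 ⟨by have := Nat.minFac_le (by omega : 0 < n); omega,
      Nat.minFac_prime (by omega)⟩
  rw [← sum_fiberwise_of_maps_to hmaps]
  refine sum_congr rfl fun p hp => ?_
  have hpN := Nat.lt_of_mem_primesBelow hp
  replace hp := Nat.prime_of_mem_primesBelow hp
  have hN : N ≠ 0 := by have := hp.two_le; omega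
  rw [← sum_image fun a _ b _ h => Nat.pow_right_injective hp.two_le h]
  congr 1
  ext n
  simp only [mem_filter, mem_Icc, mem_image]
  constructor
  · rintro ⟨⟨⟨h2, hnN⟩, r, k, hr, hk, rfl⟩, hmin⟩
    rw [hr.nat_prime.pow_minFac hk.ne'] at hmin
    subst hmin
    exact ⟨k, ⟨hk, (Nat.le_log_iff_pow_le hr.nat_prime.one_lt hN).2 hnN⟩, rfl⟩
  · rintro ⟨k, ⟨hk, hkN⟩, rfl⟩
    have hle := (Nat.le_log_iff_pow_le hp.one_lt hN).1 hkN
    have hge : p ≤ p ^ k := Nat.le_self_pow (by omega) p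
    exact ⟨⟨⟨by have := hp.two_le; omega, hle⟩, hp.isPrimePow.pow (by omega)⟩,
      hp.pow_minFac (by omega)⟩

lemma vonMangoldt_weight_mul_sub_prime_pow {q p k : ℕ} (χ : DirichletCharacter ℂ q)
    (hp : p.Prime) (hk : k ≠ 0) (x : ℝ) :
    vonMangoldt (p ^ k) * (1 / ((p ^ k : ℕ) * Real.log (p ^ k : ℕ)) - 1 / (x * Real.log x))
        * (χ (p ^ k : ℕ)).re
      - vonMangoldt (p ^ k) * (-1) ^ cardFactors (p ^ k)
        * (1 / ((p ^ k : ℕ) * Real.log (p ^ k : ℕ)) - 1 / (x * Real.log x))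
      = primePowerCoeff p (Real.log p / (x * Real.log x)) k * ((χ p ^ k).re - (-1) ^ k) := by
  have hlog : Real.log p ≠ 0 := (Real.log_pos (by exact_mod_cast hp.one_lt)).ne'
  have hp0 : (p : ℝ) ≠ 0 := by exact_mod_cast hp.ne_zero
  rw [mul_right_comm _ ((-1) ^ _), ← mul_sub, cardFactors_apply_prime_pow hp,
    vonMangoldt_apply_pow hk, vonMangoldt_apply_prime hp, Nat.cast_pow (α := ZMod q), map_pow,
    Nat.cast_pow, Real.log_pow, primePowerCoeff]
  field_simp

lemma primePowerCoeff_log_div_nonneg {P x : ℝ} (hP : 1 < P) {K : ℕ} (hK : K ≠ 0)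
    (hPK : P ^ K ≤ x) : 0 ≤ primePowerCoeff P (Real.log P / (x * Real.log x)) K := by
  have hPK0 : 0 < P ^ K := by positivity
  have hx1 : 1 < x := (one_lt_pow₀ hP hK).trans_le hPK
  have hlog : K * Real.log P ≤ Real.log x := by
    rw [← Real.log_pow]
    exact Real.log_le_log hPK0 hPK
  have hlogP : 0 < Real.log P := Real.log_pos hP
  have hlogx : 0 < Real.log x := Real.log_pos hx1
  rw [primePowerCoeff, sub_nonneg, div_le_div_iff₀ (by positivity) (by positivity)]
  nlinarith [mul_le_mul hPK hlog (by positivity) (by linarith)]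

theorem stmt_7 (q : ℕ) (χ : DirichletCharacter ℂ q) (x : ℝ) (hx : 100 ≤ x) :
    (∑ n ∈ Finset.Icc 2 ⌊x⌋₊,
        (ArithmeticFunction.vonMangoldt n : ℂ) * χ n
          * ((1 / (n * Real.log n) - 1 / (x * Real.log x) : ℝ) : ℂ)).re
      ≥ ∑ n ∈ (Finset.Icc 2 ⌊x⌋₊).filter IsPrimePow,
          ArithmeticFunction.vonMangoldt n * (-1) ^ (ArithmeticFunction.cardFactors n)
            * (1 / (n * Real.log n) - 1 / (x * Real.log x)) := by
  have hN : 64 ≤ ⌊x⌋₊ := Nat.le_floor (by norm_num; linarith)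
  rw [ge_iff_le, ← sub_nonneg, re_sum_vonMangoldt_mul, ← sum_sub_distrib,
    sum_filter_isPrimePow_eq]
  refine sum_nonneg fun p hp => ?_
  have hpN := Nat.lt_of_mem_primesBelow hp
  replace hp := Nat.prime_of_mem_primesBelow hp
  set K := Nat.log p ⌊x⌋₊
  have hK1 : 1 ≤ K := (Nat.le_log_iff_pow_le hp.one_lt (by omega)).2 (by rw [pow_one]; omega)
  have hpK : (p : ℝ) ^ K ≤ x := by
    exact_mod_cast (Nat.le_floor_iff (by linarith)).1 (Nat.pow_log_le_self p (by omega))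
  have hc : 0 ≤ Real.log p / (x * Real.log x) := by
    have := Real.log_nonneg (by linarith : 1 ≤ x)
    positivity
  rw [sum_congr rfl fun k hk =>
    vonMangoldt_weight_mul_sub_prime_pow χ hp (by have := (mem_Icc.1 hk).1; omega) x]
  refine sum_primePowerCoeff_mul_re_pow_sub_nonneg ?_ hc hK1
    (primePowerCoeff_log_div_nonneg (by exact_mod_cast hp.one_lt) (by omega) hpK)
    (χ.eq_zero_or_norm_eq_one p)
  rcases eq_or_ne p 2 with rfl | hp2
  · exact Or.inr ⟨by norm_num, (Nat.le_log_iff_pow_le one_lt_two (by omega)).2 (by omega)⟩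
  · exact Or.inl (by exact_mod_cast (show 3 ≤ p by have := hp.two_le; omega))
end

section
/- For a prime p ≥ 3, real θ, and real x ≥ 100, one has (log p)·∑_{1 ≤ k ≤ log x / log p} (−1)^{k−1}·(1 − cos(kθ))·(1/(p^k·log p^k) − 1/(x·log x)) ≥ 0. -/
/-!
Write `w k = 1/(p^k log p^k) - 1/(x log x)`, which is nonnegative for `p^k ≤ x`. Odd terms of
the sum are nonnegative, the term `k = 1` is `(1 - cos θ) w 1`, and by
`1 - cos kθ ≤ k² (1 - cos θ)` each even term is at least
`-(1 - cos θ) k² w k ≥ -(1 - cos θ) k p^(-k) / log p`. Bounding the even terms by the series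
`∑ 2j p^(-2j) = 2p²/(p² - 1)²` shows that they are dominated by `w 1` once `p ≥ 3` and
`x ≥ max(100, p²)`; if `x < p²` there are no even terms at all.
-/

open Finset Real

lemma abs_sin_nat_mul_le (n : ℕ) (u : ℝ) : |sin (n * u)| ≤ n * |sin u| := by
  induction n with
  | zero => simp
  | succ m ih =>
    calc |sin ((m + 1 : ℕ) * u)| = |sin (m * u) * cos u + cos (m * u) * sin u| := by
          push_cast; rw [add_mul, one_mul, sin_add]
      _ ≤ |sin (m * u)| * |cos u| + |cos (m * u)| * |sin u| := by
          rw [← abs_mul, ← abs_mul]; exact abs_add_le _ _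
      _ ≤ |sin (m * u)| * 1 + 1 * |sin u| := by
          gcongr <;> exact abs_cos_le_one _
      _ ≤ (m + 1 : ℕ) * |sin u| := by push_cast; linarith

lemma one_sub_cos_nat_mul_le (k : ℕ) (θ : ℝ) : 1 - cos (k * θ) ≤ k ^ 2 * (1 - cos θ) := by
  have half_angle (α : ℝ) : 1 - cos α = 2 * sin (α / 2) ^ 2 := by
    nth_rw 1 [← mul_div_cancel₀ α two_ne_zero, cos_two_mul', cos_sq']
    ring
  have hsin : sin (k * θ / 2) ^ 2 ≤ (k * sin (θ / 2)) ^ 2 := by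
    rw [sq_le_sq, abs_mul, Nat.abs_cast, mul_div_assoc]
    exact abs_sin_nat_mul_le k (θ / 2)
  rw [half_angle, half_angle]
  linarith

lemma one_sub_cos_mul_le_sum_alternating {n : ℕ} (hn : 1 ≤ n) (θ : ℝ) {a : ℕ → ℝ}
    (ha : ∀ k ∈ Icc 1 n, 0 ≤ a k) :
    (1 - cos θ) * (a 1 - ∑ k ∈ Icc 1 n with Even k, (k : ℝ) ^ 2 * a k) ≤
      ∑ k ∈ Icc 1 n, (-1 : ℝ) ^ (k - 1) * (1 - cos (k * θ)) * a k := by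
  set c := 1 - cos θ
  have hterm : ∀ k ∈ Icc 1 n,
      (if k = 1 then c * a 1 else 0) - (if Even k then c * (k ^ 2 * a k) else 0) ≤
        (-1 : ℝ) ^ (k - 1) * (1 - cos (k * θ)) * a k := by
    intro k hk
    rcases Nat.even_or_odd k with heven | hodd
    · have hk1 : k ≠ 1 := by rintro rfl; exact Nat.not_even_one heven
      rw [if_neg hk1, if_pos heven,
        (Nat.Even.sub_odd (mem_Icc.1 hk).1 heven odd_one).neg_one_pow]
      have := mul_le_mul_of_nonneg_right (one_sub_cos_nat_mul_le k θ) (ha k hk)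
      linarith
    · rw [if_neg (Nat.not_even_iff_odd.2 hodd), (Nat.Odd.sub_odd hodd odd_one).neg_one_pow]
      split_ifs with hk1
      · simp [hk1, c]
      · simpa using mul_nonneg (sub_nonneg.2 (cos_le_one _)) (ha k hk)
  calc c * (a 1 - ∑ k ∈ Icc 1 n with Even k, (k : ℝ) ^ 2 * a k)
      = ∑ k ∈ Icc 1 n,
          ((if k = 1 then c * a 1 else 0) - (if Even k then c * (k ^ 2 * a k) else 0)) := by
        rw [sum_sub_distrib, sum_ite_eq', if_pos (mem_Icc.2 ⟨le_rfl, hn⟩), ← sum_filter,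
          mul_sub, mul_sum]
    _ ≤ _ := sum_le_sum hterm

lemma sum_even_mul_pow_le {r : ℝ} (hr0 : 0 ≤ r) (hr1 : r < 1) (n : ℕ) :
    ∑ k ∈ Icc 1 n with Even k, (k : ℝ) * r ^ k ≤ 2 * r ^ 2 / (1 - r ^ 2) ^ 2 := by
  have hsub : {k ∈ Icc 1 n | Even k} ⊆ (range (n + 1)).image (fun j : ℕ ↦ 2 * j) := by
    intro k hk
    simp only [mem_filter, mem_Icc] at hk
    obtain ⟨⟨_, hkn⟩, j, rfl⟩ := hk
    exact mem_image.2 ⟨j, mem_range.2 (by omega), by ring⟩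
  have hr2 : ‖r ^ 2‖ < 1 := by
    rw [norm_pow, norm_of_nonneg hr0]; exact pow_lt_one₀ hr0 hr1 two_ne_zero
  have hsum : HasSum (fun j : ℕ ↦ ((2 * j : ℕ) : ℝ) * r ^ (2 * j))
      (2 * r ^ 2 / (1 - r ^ 2) ^ 2) := by
    have h := (hasSum_coe_mul_geometric_of_norm_lt_one hr2).mul_left 2
    rw [← mul_div_assoc] at h
    convert h using 1
    · rfl
    · funext j
      push_cast
      ring
  calc _ ≤ ∑ k ∈ (range (n + 1)).image (fun j : ℕ ↦ 2 * j), (k : ℝ) * r ^ k :=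
        sum_le_sum_of_subset_of_nonneg hsub (fun _ _ _ ↦ by positivity)
    _ = ∑ j ∈ range (n + 1), ((2 * j : ℕ) : ℝ) * r ^ (2 * j) :=
        sum_image (fun _ _ _ _ h ↦ by omega)
    _ ≤ _ := sum_le_hasSum _ (fun _ _ ↦ by positivity) hsum

lemma one_div_mul_log_le_of_le {x y : ℝ} (hy : 1 < y) (hyx : y ≤ x) :
    1 / (x * log x) ≤ 1 / (y * log y) :=
  one_div_le_one_div_of_le (mul_pos (by linarith) (log_pos hy))
    (mul_le_mul hyx (log_le_log (by linarith) hyx) (log_pos hy).le (by linarith))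

lemma two_mul_inv_sq_div_add_log_div_le {p x : ℝ} (hp : 3 ≤ p) (hx : 100 ≤ x)
    (hpx : p ^ 2 ≤ x) :
    2 * p⁻¹ ^ 2 / (1 - p⁻¹ ^ 2) ^ 2 + log p / (x * log x) ≤ p⁻¹ := by
  have hL : 0 < log p := log_pos (by linarith)
  have hlog : 2 * log p ≤ log x := by
    exact_mod_cast (pow_le_iff_le_log (by positivity) (by positivity)).1 hpx
  -- `x ≥ max(100, p²)` gives `x ≥ 10 p`, which makes the `log` term at most `1/(20 p)`.
  have h10 : 10 * p ≤ x := by nlinarith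
  have hlogx : log p / (x * log x) ≤ 1 / (20 * p) := by
    rw [div_le_div_iff₀ (by nlinarith) (by positivity)]
    nlinarith
  have hpoly : 2 * p⁻¹ ^ 2 / (1 - p⁻¹ ^ 2) ^ 2 ≤ 19 / (20 * p) := by
    have hp1 : 0 < p ^ 2 - 1 := by nlinarith
    rw [inv_pow, show 1 - (p ^ 2)⁻¹ = (p ^ 2 - 1) / p ^ 2 by field_simp, div_pow,
      div_le_div_iff₀ (by positivity) (by positivity)]
    field_simp
    nlinarith
  calc _ ≤ 19 / (20 * p) + 1 / (20 * p) := add_le_add hpoly hlogx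
    _ = p⁻¹ := by field_simp; norm_num

lemma pow_le_of_le_floor_log_div {p x : ℝ} (hp : 1 < p) (hx : 1 ≤ x) {k : ℕ}
    (hk : k ≤ ⌊log x / log p⌋₊) : p ^ k ≤ x := by
  have hL : 0 < log p := log_pos hp
  rw [pow_le_iff_le_log (by linarith) (by linarith), ← le_div_iff₀ hL]
  exact (Nat.le_floor_iff (div_nonneg (log_nonneg hx) hL.le)).1 hk

noncomputable def logWeight (p x : ℝ) (k : ℕ) : ℝ :=
  1 / (p ^ k * log (p ^ k)) - 1 / (x * log x)

lemma logWeight_nonneg {p x : ℝ} (hp : 1 < p) {k : ℕ} (hk : 1 ≤ k) (hpx : p ^ k ≤ x) :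
    0 ≤ logWeight p x k :=
  sub_nonneg.2 (one_div_mul_log_le_of_le (one_lt_pow₀ hp (by omega)) hpx)

lemma logWeight_one {p : ℝ} (hp : 1 < p) (x : ℝ) :
    logWeight p x 1 = (log p)⁻¹ * (p⁻¹ - log p / (x * log x)) := by
  have := log_pos hp
  simp only [logWeight, pow_one]
  field_simp

lemma sq_mul_logWeight_le {p x : ℝ} (hp : 1 < p) (hx : 1 < x) {k : ℕ} (hk : 1 ≤ k) :
    (k : ℝ) ^ 2 * logWeight p x k ≤ (log p)⁻¹ * (k * p⁻¹ ^ k) := by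
  have hL : 0 < log p := log_pos hp
  have hk0 : (0 : ℝ) < k := by exact_mod_cast hk
  have hxlog : 0 ≤ 1 / (x * log x) := by have := log_pos hx; positivity
  calc (k : ℝ) ^ 2 * logWeight p x k ≤ (k : ℝ) ^ 2 * (1 / (p ^ k * (k * log p))) := by
        rw [logWeight, log_pow]; gcongr; linarith
    _ = (log p)⁻¹ * (k * p⁻¹ ^ k) := by rw [inv_pow]; field_simp

lemma sum_even_sq_mul_logWeight_le {p x : ℝ} (hp : 3 ≤ p) (hx : 100 ≤ x) {n : ℕ}
    (hn : 1 ≤ n) (hpow : ∀ k ≤ n, p ^ k ≤ x) :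
    ∑ k ∈ Icc 1 n with Even k, (k : ℝ) ^ 2 * logWeight p x k ≤ logWeight p x 1 := by
  obtain rfl | hn2 := hn.eq_or_lt
  · simp only [Icc_self, filter_singleton, Nat.not_even_one, if_false, sum_empty]
    exact logWeight_nonneg (by linarith) le_rfl (by simpa using hpow 1 le_rfl)
  have hL : 0 < log p := log_pos (by linarith)
  calc ∑ k ∈ Icc 1 n with Even k, (k : ℝ) ^ 2 * logWeight p x k
      ≤ ∑ k ∈ Icc 1 n with Even k, (log p)⁻¹ * (k * p⁻¹ ^ k) :=
        sum_le_sum fun k hk ↦ sq_mul_logWeight_le (by linarith) (by linarith)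
          (mem_Icc.1 (mem_filter.1 hk).1).1
    _ ≤ (log p)⁻¹ * (2 * p⁻¹ ^ 2 / (1 - p⁻¹ ^ 2) ^ 2) := by
        rw [← mul_sum]
        gcongr
        exact sum_even_mul_pow_le (by positivity) (inv_lt_one_of_one_lt₀ (by linarith)) n
    _ ≤ logWeight p x 1 := by
        rw [logWeight_one (by linarith)]
        gcongr
        have := two_mul_inv_sq_div_add_log_div_le hp hx (hpow 2 hn2)
        have hlogx : 0 < log x := log_pos (by linarith)
        have : 0 ≤ log p / (x * log x) := by positivity
        linarith

theorem stmt_8_general (p : ℕ) (hp3 : 3 ≤ p) (θ : ℝ) (x : ℝ) (hx : 100 ≤ x) :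
    Real.log p *
      ∑ k ∈ Finset.Icc 1 ⌊Real.log x / Real.log p⌋₊,
        (-1 : ℝ) ^ (k - 1) * (1 - Real.cos (k * θ))
          * (1 / ((p : ℝ) ^ k * Real.log ((p : ℝ) ^ k)) - 1 / (x * Real.log x))
      ≥ 0 := by
  have hp : (3 : ℝ) ≤ p := by exact_mod_cast hp3
  have hL : 0 < log p := log_pos (by linarith)
  set n := ⌊log x / log p⌋₊
  have hpow : ∀ k ≤ n, (p : ℝ) ^ k ≤ x := fun k hk ↦
    pow_le_of_le_floor_log_div (by linarith) (by linarith) hk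
  refine mul_nonneg hL.le ?_
  obtain hn | hn := Nat.eq_zero_or_pos n
  · simp [hn]
  have ha : ∀ k ∈ Icc 1 n, 0 ≤ logWeight p x k := fun k hk ↦
    logWeight_nonneg (by linarith) (mem_Icc.1 hk).1 (hpow k (mem_Icc.1 hk).2)
  exact (mul_nonneg (sub_nonneg.2 (cos_le_one θ))
    (sub_nonneg.2 (sum_even_sq_mul_logWeight_le hp hx hn hpow))).trans
    (one_sub_cos_mul_le_sum_alternating hn θ ha)

theorem stmt_8 (p : ℕ) (hp : p.Prime) (hp3 : 3 ≤ p) (θ : ℝ) (x : ℝ) (hx : 100 ≤ x) :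
    Real.log p *
      ∑ k ∈ Finset.Icc 1 ⌊Real.log x / Real.log p⌋₊,
        (-1 : ℝ) ^ (k - 1) * (1 - Real.cos (k * θ))
          * (1 / ((p : ℝ) ^ k * Real.log ((p : ℝ) ^ k)) - 1 / (x * Real.log x))
      ≥ 0 :=
  stmt_8_general p hp3 θ x hx
end

section
/- For real u > 0 and any 0 < c < 1, the contour integral (1/2πi)∫_{(c)} −(Γ(s) + Γ(−s))·u^s ds equals 1 − e^{−1/u} − e^{−u}; in particular this quantity is strictly positive for all u > 0. -/
/-!
`Γ(s)` is the Mellin transform of `e^{-x}` for `0 < Re s` and, integrating by parts once, also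
of `e^{-x} - 1` for `-1 < Re s < 0` (Cauchy–Saalschütz). Mellin inversion on the line `Re s = c`
at `x = 1/u`, and on `Re s = -c` at `x = u` after `t ↦ -t`, evaluates the two halves of the
integral as `2π e^{-1/u}` and `2π (e^{-u} - 1)`. Inversion needs `Γ` integrable on vertical
lines, which follows from `‖Γ(s)‖ ‖s‖ ‖s + 1‖ = ‖Γ(s + 2)‖ ≤ Γ(Re s + 2)`. Positivity comes from
`e^{-u} < 1/(1 + u)` and `e^{-1/u} < u/(1 + u)`.
-/

open MeasureTheory Complex

open Set Filter Topology

namespace Complex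

lemma norm_Gamma_le_Gamma_re {s : ℂ} (hs : 0 < s.re) : ‖Gamma s‖ ≤ Real.Gamma s.re := by
  rw [Gamma_eq_integral hs, Real.Gamma_eq_integral hs, GammaIntegral]
  refine (norm_integral_le_integral_norm _).trans_eq (setIntegral_congr_fun measurableSet_Ioi ?_)
  intro x hx
  simp only [norm_mul, norm_real, Real.norm_eq_abs, norm_cpow_eq_rpow_re_of_pos hx, sub_re, one_re,
    abs_of_pos (Real.exp_pos _)]

lemma sq_mul_one_add_sq_im_le_norm_mul_norm_add_one {s : ℂ} {m : ℝ} (hm0 : 0 ≤ m) (hm1 : m ≤ 1)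
    (hs : m ≤ |s.re|) (hs1 : m ≤ |s.re + 1|) : m ^ 2 * (1 + s.im ^ 2) ≤ ‖s‖ * ‖s + 1‖ := by
  have key : ∀ z : ℂ, m ≤ |z.re| → m ^ 2 * (1 + z.im ^ 2) ≤ ‖z‖ ^ 2 := by
    intro z hz
    rw [Complex.sq_norm, normSq_apply]
    have : m ^ 2 ≤ z.re ^ 2 := by simpa using pow_le_pow_left₀ hm0 hz 2
    have hm2 : m ^ 2 ≤ 1 := pow_le_one₀ hm0 hm1
    nlinarith [mul_le_mul_of_nonneg_right hm2 (sq_nonneg z.im)]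
  have h1 := key s hs
  have h2 := key (s + 1) (by simpa using hs1)
  simp only [add_im, one_im, add_zero] at h2
  rw [← pow_le_pow_iff_left₀ (by positivity) (by positivity) two_ne_zero, mul_pow ‖s‖]
  simpa only [← sq] using mul_le_mul h1 h2 (by positivity) (sq_nonneg _)

lemma norm_Gamma_mul_norm_mul_norm_add_one_le {s : ℂ} (hs : -2 < s.re) (hs0 : s ≠ 0)
    (hs1 : s + 1 ≠ 0) :
    ‖Gamma s‖ * (‖s‖ * ‖s + 1‖) ≤ Real.Gamma (s.re + 2) := by
  have h : Gamma (s + 2) = (s + 1) * (s * Gamma s) := by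
    rw [show s + 2 = s + 1 + 1 by ring, Gamma_add_one _ hs1, Gamma_add_one _ hs0]
  calc ‖Gamma s‖ * (‖s‖ * ‖s + 1‖) = ‖Gamma (s + 2)‖ := by rw [h]; simp only [norm_mul]; ring
    _ ≤ Real.Gamma (s.re + 2) := by
      simpa using norm_Gamma_le_Gamma_re (s := s + 2) (by simp only [add_re]; norm_num; linarith)

lemma verticalIntegrable_Gamma {σ : ℝ} (hσ : -2 < σ) (hσ0 : σ ≠ 0) (hσ1 : σ ≠ -1) :
    VerticalIntegrable Gamma σ := by
  set m := min (min |σ| |σ + 1|) 1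
  have hm : 0 < m := lt_min (lt_min (abs_pos.2 hσ0) (abs_pos.2 fun h => hσ1 (by linarith))) one_pos
  have hcont : Continuous fun t : ℝ => Gamma (σ + t * I) := by
    refine continuous_iff_continuousAt.2 fun t =>
      (differentiableAt_Gamma _ fun n hn => ?_).continuousAt.comp (by fun_prop)
    have hre : σ = -n := by simpa using congrArg re hn
    have : n < 2 := by exact_mod_cast (show (n : ℝ) < 2 by linarith)
    interval_cases n <;> simp_all
  refine ((integrable_inv_one_add_sq.const_mul (Real.Gamma (σ + 2) / m ^ 2)).mono'
    hcont.aestronglyMeasurable (Eventually.of_forall fun t => ?_))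
  set s : ℂ := σ + t * I
  have hre : s.re = σ := by simp [s]
  have him : s.im = t := by simp [s]
  have hs0 : s ≠ 0 := fun h => hσ0 (by rw [← hre, h, zero_re])
  have hs1 : s + 1 ≠ 0 := fun h => hσ1 <| by
    have := congrArg re h
    simp only [add_re, one_re, zero_re, hre] at this
    linarith
  have hlow := sq_mul_one_add_sq_im_le_norm_mul_norm_add_one hm.le (min_le_right _ _)
    (by rw [hre]; exact (min_le_left _ _).trans (min_le_left _ _))
    (by rw [hre]; exact (min_le_left _ _).trans (min_le_right _ _))
  rw [him] at hlow
  have hG := norm_Gamma_mul_norm_mul_norm_add_one_le (hre ▸ hσ) hs0 hs1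
  rw [hre] at hG
  rw [← div_eq_mul_inv, div_div, le_div_iff₀ (by positivity)]
  calc ‖Gamma s‖ * (m ^ 2 * (1 + t ^ 2)) ≤ ‖Gamma s‖ * (‖s‖ * ‖s + 1‖) := by gcongr
    _ ≤ Real.Gamma (σ + 2) := hG

end Complex

lemma mellin_exp_neg {s : ℂ} (hs : 0 < s.re) :
    mellin (fun x : ℝ => (Real.exp (-x) : ℂ)) s = Gamma s := by
  rw [Gamma_eq_integral hs, GammaIntegral_eq_mellin]

lemma mellinConvergent_exp_neg {s : ℂ} (hs : 0 < s.re) :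
    MellinConvergent (fun x : ℝ => (Real.exp (-x) : ℂ)) s :=
  (GammaIntegral_convergent hs).congr_fun (fun x _ => by simp [smul_eq_mul, mul_comm])
    measurableSet_Ioi

lemma norm_exp_neg_sub_one {x : ℝ} (hx : 0 ≤ x) :
    ‖(Real.exp (-x) : ℂ) - 1‖ = 1 - Real.exp (-x) := by
  rw [← ofReal_one, ← ofReal_sub, norm_real, Real.norm_eq_abs, abs_of_nonpos, neg_sub]
  linarith [Real.exp_le_one_iff.2 (neg_nonpos.2 hx)]

lemma norm_exp_neg_sub_one_le_one {x : ℝ} (hx : 0 ≤ x) : ‖(Real.exp (-x) : ℂ) - 1‖ ≤ 1 := by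
  rw [norm_exp_neg_sub_one hx]
  linarith [Real.exp_pos (-x)]

lemma norm_exp_neg_sub_one_le_self {x : ℝ} (hx : 0 ≤ x) : ‖(Real.exp (-x) : ℂ) - 1‖ ≤ x := by
  rw [norm_exp_neg_sub_one hx]
  linarith [Real.add_one_le_exp (-x)]

lemma mellinConvergent_exp_neg_sub_one {s : ℂ} (hs0 : -1 < s.re) (hs1 : s.re < 0) :
    MellinConvergent (fun x : ℝ => (Real.exp (-x) : ℂ) - 1) s := by
  refine mellinConvergent_of_isBigO_rpow (a := 0) (b := -1)
    ((by fun_prop : Continuous _).continuousOn.locallyIntegrableOn measurableSet_Ioi) ?_ hs1 ?_ hs0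
  · refine Asymptotics.IsBigO.of_bound 1 ?_
    filter_upwards [eventually_ge_atTop 0] with x hx
    simpa using norm_exp_neg_sub_one_le_one hx
  · refine Asymptotics.IsBigO.of_bound 1 ?_
    filter_upwards [self_mem_nhdsWithin] with x (hx : 0 < x)
    simpa [abs_of_pos hx] using norm_exp_neg_sub_one_le_self hx.le

lemma mellin_exp_neg_sub_one {s : ℂ} (hs0 : -1 < s.re) (hs1 : s.re < 0) :
    mellin (fun x : ℝ => (Real.exp (-x) : ℂ) - 1) s = Gamma s := by
  have hs : s ≠ 0 := fun h => by simp [h] at hs1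
  have hs' : 0 < (s + 1).re := by simp only [add_re, one_re]; linarith
  set u : ℝ → ℂ := fun x => (Real.exp (-x) : ℂ) - 1
  set v : ℝ → ℂ := fun x => (x : ℂ) ^ s / s
  have hu : ∀ x ∈ Ioi (0 : ℝ), HasDerivAt u (-(Real.exp (-x) : ℂ)) x := fun x _ =>
    (((Real.hasDerivAt_exp (-x)).comp x (hasDerivAt_neg x)).ofReal_comp.sub_const 1).congr_deriv
      (by push_cast; ring)
  have hv : ∀ x ∈ Ioi (0 : ℝ), HasDerivAt v ((x : ℂ) ^ (s - 1)) x := fun x hx => by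
    simpa [hs] using (hasDerivAt_ofReal_cpow_const' (ne_of_gt hx) (r := s - 1)
      (fun h => hs (by linear_combination h)))
  have huv_norm : ∀ x : ℝ, 0 < x → ‖u x * v x‖ = ‖u x‖ * x ^ s.re / ‖s‖ := fun x hx => by
    simp only [v, norm_mul, norm_div, norm_cpow_eq_rpow_re_of_pos hx, mul_div_assoc]
  have h_zero : Tendsto (u * v) (𝓝[>] 0) (𝓝 0) := by
    refine squeeze_zero_norm' (a := fun x => x ^ (s.re + 1) / ‖s‖) ?_ ?_
    · filter_upwards [self_mem_nhdsWithin] with x (hx : 0 < x)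
      rw [Pi.mul_apply, huv_norm x hx, Real.rpow_add_one hx.ne', mul_comm _ x]
      gcongr
      exact norm_exp_neg_sub_one_le_self hx.le
    · have := ((Real.continuousAt_rpow_const 0 (s.re + 1) (Or.inr (by linarith))).tendsto.div_const
        ‖s‖).mono_left (nhdsWithin_le_nhds (s := Ioi 0))
      rwa [Real.zero_rpow (by linarith), zero_div] at this
  have h_infty : Tendsto (u * v) atTop (𝓝 0) := by
    refine squeeze_zero_norm' (a := fun x => x ^ s.re / ‖s‖) ?_ ?_
    · filter_upwards [eventually_gt_atTop 0] with x hx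
      rw [Pi.mul_apply, huv_norm x hx]
      gcongr
      exact mul_le_of_le_one_left (by positivity) (norm_exp_neg_sub_one_le_one hx.le)
    · simpa using (tendsto_rpow_neg_atTop (y := -s.re) (by linarith)).div_const ‖s‖
  have huv' : IntegrableOn (u * fun x : ℝ => (x : ℂ) ^ (s - 1)) (Ioi 0) :=
    (mellinConvergent_exp_neg_sub_one hs0 hs1).congr_fun (fun x _ => mul_comm _ _) measurableSet_Ioi
  have hu'v : IntegrableOn ((fun x => -(Real.exp (-x) : ℂ)) * v) (Ioi 0) :=
    IntegrableOn.congr_fun ((GammaIntegral_convergent hs').div_const s).neg (fun x _ => by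
      simp [v, mul_div_assoc]) measurableSet_Ioi
  have hparts := integral_Ioi_mul_deriv_eq_deriv_mul hu hv huv' hu'v h_zero h_infty
  calc mellin u s = ∫ x in Ioi (0 : ℝ), u x * (x : ℂ) ^ (s - 1) :=
        setIntegral_congr_fun measurableSet_Ioi fun x _ => by simp [smul_eq_mul, mul_comm]
    _ = GammaIntegral (s + 1) / s := by
        rw [hparts, sub_self, zero_sub, GammaIntegral, ← integral_div, ← integral_neg]
        refine setIntegral_congr_fun measurableSet_Ioi fun x _ => ?_
        simp [v, mul_div_assoc]
    _ = Gamma s := by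
        rw [← Gamma_eq_integral hs', Gamma_add_one s hs, mul_div_cancel_left₀ _ hs]

lemma integral_cpow_neg_mul_mellin_eq {f : ℝ → ℂ} {σ x : ℝ} (hx : 0 < x)
    (hf : MellinConvergent f σ) (hFf : VerticalIntegrable (mellin f) σ) (hfx : ContinuousAt f x) :
    ∫ t : ℝ, (x : ℂ) ^ (-(σ + t * I)) * mellin f (σ + t * I) = 2 * Real.pi * f x := by
  have h := mellinInv_mellin_eq σ f hx hf hFf hfx
  simp only [mellinInv, smul_eq_mul, real_smul] at h
  have h2π : (2 * Real.pi : ℂ) * ((1 / (2 * Real.pi) : ℝ) : ℂ) = 1 := by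
    push_cast
    field_simp
  rw [← h, ← mul_assoc, h2π, one_mul]

lemma ofReal_cpow_eq_one_div_cpow_neg {u : ℝ} (hu : 0 < u) (w : ℂ) :
    (u : ℂ) ^ w = ((1 / u : ℝ) : ℂ) ^ (-w) := by
  have harg : ((u : ℂ)).arg ≠ Real.pi := by
    rw [arg_ofReal_of_nonneg hu.le]
    exact Real.pi_ne_zero.symm
  rw [one_div, ofReal_inv, inv_cpow _ _ harg, cpow_neg, inv_inv]

lemma integral_Gamma_mul_cpow {u c : ℝ} (hu : 0 < u) (hc : 0 < c) :
    ∫ t : ℝ, Gamma (c + I * t) * (u : ℂ) ^ ((c : ℂ) + I * t) = 2 * Real.pi * exp (-(1 / u)) := by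
  have hGamma : ∀ t : ℝ,
      mellin (fun x : ℝ => (Real.exp (-x) : ℂ)) (c + t * I) = Gamma (c + t * I) :=
    fun t => mellin_exp_neg (by simpa using hc)
  have h := integral_cpow_neg_mul_mellin_eq (one_div_pos.2 hu)
    (mellinConvergent_exp_neg (by simpa))
    ((verticalIntegrable_Gamma (by linarith) hc.ne' (by linarith)).congr
      (Eventually.of_forall fun t => (hGamma t).symm)) (by fun_prop)
  simp only [hGamma, ← ofReal_cpow_eq_one_div_cpow_neg hu] at h
  convert h using 1
  · exact integral_congr_ae (Eventually.of_forall fun t => by ring_nf)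
  · push_cast; ring_nf

lemma integral_Gamma_neg_mul_cpow {u c : ℝ} (hu : 0 < u) (hc0 : 0 < c) (hc1 : c < 1) :
    ∫ t : ℝ, Gamma (-(c + I * t)) * (u : ℂ) ^ ((c : ℂ) + I * t) =
      2 * Real.pi * (exp (-u) - 1) := by
  have hre : ∀ t : ℝ, ((-c : ℝ) + t * I : ℂ).re = -c := fun t => by simp
  have hGamma : ∀ t : ℝ, mellin (fun x : ℝ => (Real.exp (-x) : ℂ) - 1) ((-c : ℝ) + t * I) =
      Gamma ((-c : ℝ) + t * I) :=
    fun t => mellin_exp_neg_sub_one (by rw [hre]; linarith) (by rw [hre]; linarith)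
  have h := integral_cpow_neg_mul_mellin_eq hu
    (mellinConvergent_exp_neg_sub_one (by simpa using hc1) (by simpa using hc0))
    ((verticalIntegrable_Gamma (by linarith) (by linarith) (by linarith)).congr
      (Eventually.of_forall fun t => (hGamma t).symm)) (by fun_prop)
  simp only [hGamma] at h
  rw [← integral_neg_eq_self]
  convert h using 1
  · exact integral_congr_ae (Eventually.of_forall fun t => by push_cast; ring_nf)
  · push_cast; ring_nf

lemma exp_neg_mul_one_add_lt_one {x : ℝ} (hx : 0 < x) : Real.exp (-x) * (1 + x) < 1 := by
  rw [Real.exp_neg, inv_mul_lt_iff₀ (Real.exp_pos x), mul_one, add_comm]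
  exact Real.add_one_lt_exp hx.ne'

lemma exp_neg_inv_add_exp_neg_lt_one {u : ℝ} (hu : 0 < u) :
    Real.exp (-(1 / u)) + Real.exp (-u) < 1 := by
  have h1 := exp_neg_mul_one_add_lt_one hu
  have h2 := exp_neg_mul_one_add_lt_one (one_div_pos.2 hu)
  rw [← mul_lt_mul_iff_of_pos_right hu, mul_assoc, add_mul, one_div_mul_cancel hu.ne', one_mul,
    add_comm] at h2
  nlinarith

lemma integrable_mul_ofReal_cpow {f : ℝ → ℂ} (hf : Integrable f) {u : ℝ} (hu : 0 < u) (c : ℝ) :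
    Integrable fun t : ℝ => f t * (u : ℂ) ^ ((c : ℂ) + I * t) := by
  have hbound : ∀ᵐ t : ℝ, ‖(u : ℂ) ^ ((c : ℂ) + I * t)‖ ≤ u ^ c :=
    Eventually.of_forall fun t => by simp [norm_cpow_eq_rpow_re_of_pos hu]
  have hcont : Continuous fun t : ℝ => (u : ℂ) ^ ((c : ℂ) + I * t) :=
    Continuous.const_cpow (by fun_prop) (.inl (ofReal_ne_zero.2 hu.ne'))
  exact hf.mul_bdd hcont.aestronglyMeasurable hbound

theorem stmt_13 (u : ℝ) (hu : 0 < u) (c : ℝ) (hc0 : 0 < c) (hc1 : c < 1) :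
    (1 / (2 * Real.pi * Complex.I)) *
        ∫ t : ℝ, -(Complex.Gamma (c + Complex.I * t) + Complex.Gamma (-(c + Complex.I * t)))
            * (u : ℂ) ^ ((c : ℂ) + Complex.I * t) * Complex.I
      = 1 - Complex.exp (-(1 / u)) - Complex.exp (-u) ∧
    0 < 1 - Real.exp (-(1 / u)) - Real.exp (-u) := by
  refine ⟨?_, by linarith [exp_neg_inv_add_exp_neg_lt_one hu]⟩
  have hGamma : Integrable fun t : ℝ => Gamma (c + I * t) :=
    (verticalIntegrable_Gamma (by linarith) hc0.ne' (by linarith)).congr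
      (Eventually.of_forall fun t => by simp only [mul_comm])
  have hGamma_neg : Integrable fun t : ℝ => Gamma (-(c + I * t)) :=
    (verticalIntegrable_Gamma (σ := -c) (by linarith) (by linarith) (by linarith)).comp_neg.congr
      (Eventually.of_forall fun t => by push_cast; ring_nf)
  have hsplit : (∫ t : ℝ, -(Gamma (c + I * t) + Gamma (-(c + I * t))) *
        (u : ℂ) ^ ((c : ℂ) + I * t) * I) =
      -I * ((∫ t : ℝ, Gamma (c + I * t) * (u : ℂ) ^ ((c : ℂ) + I * t)) +
        ∫ t : ℝ, Gamma (-(c + I * t)) * (u : ℂ) ^ ((c : ℂ) + I * t)) := by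
    rw [← integral_add (integrable_mul_ofReal_cpow hGamma hu c)
      (integrable_mul_ofReal_cpow hGamma_neg hu c), ← integral_const_mul]
    exact integral_congr_ae (Eventually.of_forall fun t => by ring)
  rw [hsplit, integral_Gamma_mul_cpow hu hc0, integral_Gamma_neg_mul_cpow hu hc0 hc1]
  field_simp
  ring
end
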